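/- Let f: T → R be Lipschitz with constant Lip(f) on the unit torus T = R/Z with distance d_T(x,y) = |x-y|(1-|x-y|) (representatives in [0,1)). Define L^T f(u) = c ∫_{T∖{0}} (f(u+v) - f(u)) / d_T(0,v) dv for a constant c > 0. Then the integral converges absolutely for every u, and u ↦ L^T f(u) satisfies the modulus-of-continuity bound |L^T f(y) - L^T f(x)| ≤ 4 c Lip(f) d_T(x,y) (2 + log(1/d_T(x,y))) for all x ≠ y; in particular L^T f is continuous on T. -/

import Mathlib

/-!
The jump `f (u + v) - f u` is at most `K d_T(0, v)`, so the integrand of `L^T f` is bounded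
by `K`: this gives integrability and, by dominated convergence, continuity. For the modulus
of continuity, `|f (y + v) - f y - f (x + v) + f x| ≤ 2K min(d_T(x, y), d_T(0, v))`, so with
`a = d_T(x, y)` the integrands differ by at most `2K min(1, a / (v(1 - v)))`. Splitting
`1 / (v(1 - v)) = 1 / v + 1 / (1 - v)` and using `∫₀¹ min(1, a / v) dv = a (1 + log (1 / a))`
bounds the difference by `4cK a (1 + log (1 / a))`.
-/

open MeasureTheory Set

/-- `torusDist (x - y)` is the distance `d_T(x, y)` on `ℝ/ℤ`. -/
noncomputable def torusDist (t : ℝ) : ℝ := Int.fract t * (1 - Int.fract t)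

lemma torusDist_nonneg (t : ℝ) : 0 ≤ torusDist t :=
  mul_nonneg (Int.fract_nonneg t) (sub_nonneg.2 (Int.fract_lt_one t).le)

lemma torusDist_pos {t : ℝ} (ht : Int.fract t ≠ 0) : 0 < torusDist t :=
  mul_pos ((Int.fract_nonneg t).lt_of_ne' ht) (sub_pos.2 (Int.fract_lt_one t))

lemma torusDist_le_one (t : ℝ) : torusDist t ≤ 1 := by
  have := Int.fract_nonneg t
  have := Int.fract_lt_one t
  unfold torusDist; nlinarith

lemma torusDist_of_mem_Ioo {v : ℝ} (hv : v ∈ Ioo 0 1) : torusDist v = v * (1 - v) := by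
  rw [torusDist, Int.fract_eq_self.2 ⟨hv.1.le, hv.2⟩]

lemma torusDist_le_abs (t : ℝ) : torusDist t ≤ |t| :=
  calc torusDist t ≤ min (Int.fract t) (1 - Int.fract t) :=
        le_min (mul_le_of_le_one_right (Int.fract_nonneg t) (by linarith [Int.fract_nonneg t]))
          (mul_le_of_le_one_left (by linarith [Int.fract_lt_one t]) (Int.fract_lt_one t).le)
    _ = |t - round t| := (abs_sub_round_eq_min t).symm
    _ ≤ |t - ((0 : ℤ) : ℝ)| := round_le t 0
    _ = |t| := by simp

lemma min_one_add_le {p q : ℝ} (hp : 0 ≤ p) (hq : 0 ≤ q) :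
    min 1 (p + q) ≤ min 1 p + min 1 q := by
  simp only [min_def]; split_ifs <;> linarith

lemma integrableOn_min_one {g : ℝ → ℝ} {s : Set ℝ} (hg : Measurable g)
    (hs : MeasurableSet s) (hs' : volume s ≠ ⊤) (hg0 : ∀ v ∈ s, 0 ≤ g v) :
    IntegrableOn (fun v => min 1 (g v)) s :=
  Measure.integrableOn_of_bounded hs' (measurable_const.min hg).aestronglyMeasurable
    (M := 1) <|
    (ae_restrict_mem hs).mono fun v hv => by
      rw [Real.norm_eq_abs, abs_of_nonneg (le_min zero_le_one (hg0 v hv))]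
      exact min_le_left _ _

lemma integral_Ioo_min_one_div {a : ℝ} (ha : 0 < a) (ha1 : a ≤ 1) :
    ∫ v in Ioo 0 1, min 1 (a / v) = a * (1 + Real.log (1 / a)) := by
  have hint : ∀ b, 0 ≤ b → IntegrableOn (fun v => min 1 (a / v)) (Ioc b 1) := fun b hb =>
    integrableOn_min_one (by fun_prop) measurableSet_Ioc measure_Ioc_lt_top.ne
      fun v hv => div_nonneg ha.le (hb.trans hv.1.le)
  have h_small : ∫ v in Ioc 0 a, min 1 (a / v) = a := by
    rw [setIntegral_congr_fun measurableSet_Ioc (g := fun _ => 1)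
      fun v hv => min_eq_left ((one_le_div hv.1).2 hv.2)]
    simp [ha.le]
  have h_large : ∫ v in Ioc a 1, min 1 (a / v) = a * Real.log (1 / a) := by
    rw [setIntegral_congr_fun measurableSet_Ioc (g := fun v => a * v⁻¹)
      fun v hv => (min_eq_right ((div_le_one (ha.trans hv.1)).2 hv.1.le)).trans
        (div_eq_mul_inv _ _),
      ← intervalIntegral.integral_of_le ha1, intervalIntegral.integral_const_mul,
      integral_inv_of_pos ha one_pos]
  rw [← integral_Ioc_eq_integral_Ioo, ← Ioc_union_Ioc_eq_Ioc ha.le ha1,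
    setIntegral_union (Ioc_disjoint_Ioc_of_le le_rfl) measurableSet_Ioc
      ((hint 0 le_rfl).mono_set (Ioc_subset_Ioc_right ha1)) (hint a ha.le), h_small, h_large]
  ring

lemma integral_Ioo_min_one_div_one_sub {a : ℝ} (ha : 0 < a) (ha1 : a ≤ 1) :
    ∫ v in Ioo 0 1, min 1 (a / (1 - v)) = a * (1 + Real.log (1 / a)) := by
  rw [← integral_Ioc_eq_integral_Ioo, ← intervalIntegral.integral_of_le zero_le_one,
    intervalIntegral.integral_comp_sub_left (fun v => min 1 (a / v)) 1, sub_self, sub_zero,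
    intervalIntegral.integral_of_le zero_le_one, integral_Ioc_eq_integral_Ioo,
    integral_Ioo_min_one_div ha ha1]

lemma integral_Ioo_min_one_div_mul_one_sub_le {a : ℝ} (ha : 0 < a) (ha1 : a ≤ 1) :
    ∫ v in Ioo 0 1, min 1 (a / (v * (1 - v))) ≤ 2 * (a * (1 + Real.log (1 / a))) := by
  have hint : ∀ g : ℝ → ℝ, Measurable g → (∀ v ∈ Ioo (0 : ℝ) 1, 0 < g v) →
      IntegrableOn (fun v => min 1 (a / g v)) (Ioo 0 1) := fun g hg hg0 =>
    integrableOn_min_one (measurable_const.div hg) measurableSet_Ioo measure_Ioo_lt_top.ne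
      fun v hv => div_nonneg ha.le (hg0 v hv).le
  have hleft := hint (fun v => v) measurable_id' fun v hv => hv.1
  have hright := hint (fun v => 1 - v) (by fun_prop) fun v hv => sub_pos.2 hv.2
  calc ∫ v in Ioo 0 1, min 1 (a / (v * (1 - v)))
      ≤ ∫ v in Ioo 0 1, (min 1 (a / v) + min 1 (a / (1 - v))) := by
        refine setIntegral_mono_on (hint _ (by fun_prop) fun v hv => mul_pos hv.1 (sub_pos.2 hv.2))
          (hleft.add hright) measurableSet_Ioo fun v hv => ?_
        have hv0 : v ≠ 0 := hv.1.ne'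
        have hv1 : 1 - v ≠ 0 := (sub_pos.2 hv.2).ne'
        rw [show a / (v * (1 - v)) = a / v + a / (1 - v) by field_simp; ring]
        exact min_one_add_le (div_nonneg ha.le hv.1.le) (div_nonneg ha.le (sub_pos.2 hv.2).le)
    _ = 2 * (a * (1 + Real.log (1 / a))) := by
        rw [integral_add hleft hright, integral_Ioo_min_one_div ha ha1,
          integral_Ioo_min_one_div_one_sub ha ha1]
        ring

/-- `L^T f (u)`; on `(0, 1)` the kernel denominator `v * (1 - v)` is `d_T(0, v)`. -/
noncomputable def torusGenerator (c : ℝ) (f : ℝ → ℝ) (u : ℝ) : ℝ :=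
  c * ∫ v in Ioo 0 1, (f (u + v) - f u) / (v * (1 - v))

section TorusLipschitz

variable {f : ℝ → ℝ} {K : ℝ}

lemma lipschitzWith_of_abs_sub_le_torusDist
    (hlip : ∀ x y, |f x - f y| ≤ K * torusDist (x - y)) :
    LipschitzWith K.toNNReal f :=
  LipschitzWith.of_dist_le_mul fun x y => by
    rw [Real.dist_eq, Real.dist_eq]
    exact (hlip x y).trans (mul_le_mul (Real.le_coe_toNNReal K) (torusDist_le_abs _)
      (torusDist_nonneg _) K.toNNReal.coe_nonneg)

lemma abs_jump_div_le (hlip : ∀ x y, |f x - f y| ≤ K * torusDist (x - y)) (u : ℝ) {v : ℝ}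
    (hv : v ∈ Ioo 0 1) : |(f (u + v) - f u) / (v * (1 - v))| ≤ K := by
  have hd : 0 < v * (1 - v) := mul_pos hv.1 (sub_pos.2 hv.2)
  rw [abs_div, abs_of_pos hd, div_le_iff₀ hd, ← torusDist_of_mem_Ioo hv]
  simpa using hlip (u + v) u

lemma integrableOn_jump_div (hlip : ∀ x y, |f x - f y| ≤ K * torusDist (x - y)) (u : ℝ) :
    IntegrableOn (fun v => (f (u + v) - f u) / (v * (1 - v))) (Ioo 0 1) := by
  have hf := (lipschitzWith_of_abs_sub_le_torusDist hlip).continuous.measurable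
  exact Measure.integrableOn_of_bounded measure_Ioo_lt_top.ne
    (Measurable.aestronglyMeasurable (by fun_prop)) <|
    (ae_restrict_mem measurableSet_Ioo).mono fun v hv => abs_jump_div_le hlip u hv

lemma continuous_torusGenerator (hlip : ∀ x y, |f x - f y| ≤ K * torusDist (x - y)) (c : ℝ) :
    Continuous (torusGenerator c f) := by
  have hf := (lipschitzWith_of_abs_sub_le_torusDist hlip).continuous
  refine continuous_const.mul <| continuous_of_dominated (bound := fun _ => K)
    (fun u => (integrableOn_jump_div hlip u).aestronglyMeasurable)
    (fun u => (ae_restrict_mem measurableSet_Ioo).mono fun v hv => abs_jump_div_le hlip u hv)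
    (integrableOn_const measure_Ioo_lt_top.ne) (ae_of_all _ fun v => by fun_prop)

lemma abs_jump_sub_jump_le (hK : 0 ≤ K) (hlip : ∀ x y, |f x - f y| ≤ K * torusDist (x - y))
    (x y v : ℝ) :
    |f (y + v) - f y - (f (x + v) - f x)| ≤ 2 * K * min (torusDist (x - y)) (torusDist v) := by
  rw [mul_min_of_nonneg _ _ (by positivity)]
  refine le_min ?_ ?_
  · calc |f (y + v) - f y - (f (x + v) - f x)|
        = |(f (x + v) - f (y + v)) - (f x - f y)| := by rw [← abs_neg]; ring_nf
      _ ≤ |f (x + v) - f (y + v)| + |f x - f y| := abs_sub _ _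
      _ ≤ K * torusDist (x - y) + K * torusDist (x - y) :=
        add_le_add (by simpa using hlip (x + v) (y + v)) (hlip x y)
      _ = 2 * K * torusDist (x - y) := by ring
  · calc |f (y + v) - f y - (f (x + v) - f x)|
        ≤ |f (y + v) - f y| + |f (x + v) - f x| := abs_sub _ _
      _ ≤ K * torusDist v + K * torusDist v :=
        add_le_add (by simpa using hlip (y + v) y) (by simpa using hlip (x + v) x)
      _ = 2 * K * torusDist v := by ring

lemma abs_jump_div_sub_jump_div_le (hK : 0 ≤ K)
    (hlip : ∀ x y, |f x - f y| ≤ K * torusDist (x - y)) (x y : ℝ) {v : ℝ}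
    (hv : v ∈ Ioo 0 1) :
    |(f (y + v) - f y) / (v * (1 - v)) - (f (x + v) - f x) / (v * (1 - v))|
      ≤ 2 * K * min 1 (torusDist (x - y) / (v * (1 - v))) := by
  have hd : 0 < v * (1 - v) := mul_pos hv.1 (sub_pos.2 hv.2)
  rw [div_sub_div_same, abs_div, abs_of_pos hd, div_le_iff₀ hd, mul_assoc,
    min_mul_of_nonneg _ _ hd.le, one_mul, div_mul_cancel₀ _ hd.ne', min_comm,
    ← torusDist_of_mem_Ioo hv]
  exact abs_jump_sub_jump_le hK hlip x y v

lemma abs_torusGenerator_sub_le (hK : 0 ≤ K)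
    (hlip : ∀ x y, |f x - f y| ≤ K * torusDist (x - y))
    {c : ℝ} (hc : 0 ≤ c) {x y : ℝ} (hxy : Int.fract (x - y) ≠ 0) :
    |torusGenerator c f y - torusGenerator c f x|
      ≤ 4 * c * K * torusDist (x - y) * (1 + Real.log (1 / torusDist (x - y))) := by
  set a := torusDist (x - y)
  have hdiff : ∀ v ∈ Ioo (0 : ℝ) 1, ‖(f (y + v) - f y) / (v * (1 - v))
      - (f (x + v) - f x) / (v * (1 - v))‖ ≤ 2 * K * min 1 (a / (v * (1 - v))) :=
    fun v hv => abs_jump_div_sub_jump_div_le hK hlip x y hv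
  have hmajorant : IntegrableOn (fun v => 2 * K * min 1 (a / (v * (1 - v)))) (Ioo 0 1) :=
    (integrableOn_min_one (by fun_prop) measurableSet_Ioo measure_Ioo_lt_top.ne
      fun v hv => div_nonneg (torusDist_nonneg _) (mul_pos hv.1 (sub_pos.2 hv.2)).le).const_mul _
  calc |torusGenerator c f y - torusGenerator c f x|
      = c * ‖∫ v in Ioo 0 1, ((f (y + v) - f y) / (v * (1 - v))
          - (f (x + v) - f x) / (v * (1 - v)))‖ := by
        rw [torusGenerator, torusGenerator, ← mul_sub, abs_mul, abs_of_nonneg hc,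
          integral_sub (integrableOn_jump_div hlip y) (integrableOn_jump_div hlip x),
          Real.norm_eq_abs]
    _ ≤ c * ∫ v in Ioo 0 1, 2 * K * min 1 (a / (v * (1 - v))) := by
        gcongr
        exact norm_integral_le_of_norm_le hmajorant
          ((ae_restrict_mem measurableSet_Ioo).mono hdiff)
    _ = c * (2 * K * ∫ v in Ioo 0 1, min 1 (a / (v * (1 - v)))) := by rw [integral_const_mul]
    _ ≤ c * (2 * K * (2 * (a * (1 + Real.log (1 / a))))) := by
        gcongr
        exact integral_Ioo_min_one_div_mul_one_sub_le (torusDist_pos hxy) (torusDist_le_one _)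
    _ = 4 * c * K * a * (1 + Real.log (1 / a)) := by ring

end TorusLipschitz

theorem stmt_8_general (c K : ℝ) (hc : 0 < c) (hK : 0 ≤ K) (f : ℝ → ℝ)
    (hlip : ∀ x y : ℝ, |f x - f y| ≤ K * (Int.fract (x - y) * (1 - Int.fract (x - y)))) :
    (∀ u : ℝ, IntegrableOn (fun v => (f (u + v) - f u) / (v * (1 - v))) (Set.Ioo 0 1)) ∧
    (∀ x y : ℝ, Int.fract (x - y) ≠ 0 →
      |(c * ∫ v in Set.Ioo (0:ℝ) 1, (f (y + v) - f y) / (v * (1 - v)))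
          - (c * ∫ v in Set.Ioo (0:ℝ) 1, (f (x + v) - f x) / (v * (1 - v)))|
        ≤ 4 * c * K * (Int.fract (x - y) * (1 - Int.fract (x - y)))
            * (2 + Real.log (1 / (Int.fract (x - y) * (1 - Int.fract (x - y)))))) ∧
    Continuous (fun u => c * ∫ v in Set.Ioo (0:ℝ) 1, (f (u + v) - f u) / (v * (1 - v))) := by
  refine ⟨integrableOn_jump_div hlip, fun x y hxy => ?_, continuous_torusGenerator hlip c⟩
  calc |torusGenerator c f y - torusGenerator c f x|
      ≤ 4 * c * K * torusDist (x - y) * (1 + Real.log (1 / torusDist (x - y))) :=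
        abs_torusGenerator_sub_le hK hlip hc.le hxy
    _ ≤ 4 * c * K * torusDist (x - y) * (2 + Real.log (1 / torusDist (x - y))) := by
        have := torusDist_nonneg (x - y)
        gcongr
        norm_num

/-- For `f` Lipschitz on the unit torus (represented by a 1-periodic function on `ℝ` with
`|f x - f y| ≤ K d_T(x,y)`, `d_T(x,y) = fract(x-y)(1-fract(x-y))`), the generator
`L^T f(u) = c ∫_0^1 (f(u+v)-f(u))/(v(1-v)) dv` is well defined (the integral converges
absolutely), satisfies `|L^T f(y) - L^T f(x)| ≤ 4cK d_T(x,y)(2 + log(1/d_T(x,y)))`,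
and is continuous. -/
theorem stmt_8 (c K : ℝ) (hc : 0 < c) (hK : 0 ≤ K) (f : ℝ → ℝ)
    (hper : Function.Periodic f 1)
    (hlip : ∀ x y : ℝ, |f x - f y| ≤ K * (Int.fract (x - y) * (1 - Int.fract (x - y)))) :
    (∀ u : ℝ, IntegrableOn (fun v => (f (u + v) - f u) / (v * (1 - v))) (Set.Ioo 0 1)) ∧
    (∀ x y : ℝ, Int.fract (x - y) ≠ 0 →
      |(c * ∫ v in Set.Ioo (0:ℝ) 1, (f (y + v) - f y) / (v * (1 - v)))
          - (c * ∫ v in Set.Ioo (0:ℝ) 1, (f (x + v) - f x) / (v * (1 - v)))|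
        ≤ 4 * c * K * (Int.fract (x - y) * (1 - Int.fract (x - y)))
            * (2 + Real.log (1 / (Int.fract (x - y) * (1 - Int.fract (x - y)))))) ∧
    Continuous (fun u => c * ∫ v in Set.Ioo (0:ℝ) 1, (f (u + v) - f u) / (v * (1 - v))) :=
  stmt_8_general c K hc hK f hlip
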